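/- arXiv:1901.11023 — 2 statements merged into one kernel-verified Lean document; each statement's English description precedes it below -/
import Mathlib

section
/- Let k ≥ 1 and let g : ℝ → ℝ be defined by g(x) = Σ_{m=0}^{k} 2|β_m| cos(m x + θ_m), where β_0,…,β_k ∈ ℂ, θ_m = arg(β_m), and at least one β_j with j ≥ 1 is nonzero. Then for every x ∈ ℝ there exists i with 1 ≤ i ≤ 4k such that the i-th derivative g^{(i)}(x) ≠ 0. -/
/-!
Differentiating `∑ rₘ cos (ωₘ y + θₘ)` twice multiplies the `m`-th term by `-ωₘ²`. Hence, with
`φₘ = ωₘ x + θₘ`, the derivatives of orders `2l + 2` and `2l + 1` at `x` are, up to sign, the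
power sums `∑ (rₘ ωₘ² cos φₘ) (ωₘ²)ˡ` and `∑ (rₘ ωₘ sin φₘ) (ωₘ²)ˡ`. If they vanish for every `l`
below the number of terms, the Vandermonde matrix of the distinct nodes `ωₘ²` kills all the
coefficients, so `rₘ cos φₘ = rₘ sin φₘ = 0`, i.e. `rₘ = 0`, whenever `ωₘ ≠ 0`. For `g` take
`ωₘ = m`, `rₘ = 2‖βₘ‖`, `m ≤ k`: only derivatives of order at most `2k + 2 ≤ 4k` are needed.
-/

open Finset Real

theorem Finset.eq_zero_of_forall_sum_mul_pow_eq_zero {K ι : Type*} [CommRing K] [IsDomain K]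
    {s : Finset ι} {v f : ι → K} (hv : Set.InjOn v s)
    (h : ∀ l < #s, ∑ i ∈ s, f i * v i ^ l = 0) {i : ι} (hi : i ∈ s) : f i = 0 := by
  let e := s.equivFin
  have hinj : Function.Injective fun a => v (e.symm a) := fun a b hab =>
    e.symm.injective (Subtype.ext (hv (e.symm a).2 (e.symm b).2 hab))
  have hzero := Matrix.eq_zero_of_forall_pow_sum_mul_pow_eq_zero hinj fun l => by
    rw [← h l l.isLt, ← s.sum_coe_sort]
    exact e.symm.sum_comp fun j : s => f j * v j ^ (l : ℕ)
  simpa using congrFun hzero (e ⟨i, hi⟩)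

theorem iteratedDeriv_cos_mul_add (ω θ : ℝ) (n : ℕ) :
    iteratedDeriv n (fun y => cos (ω * y + θ)) =
      fun y => ω ^ n * iteratedDeriv n cos (ω * y + θ) := by
  rw [iteratedDeriv_comp_const_mul (f := fun z => cos (z + θ)) (by fun_prop),
    iteratedDeriv_comp_add_const]

section TrigSum

variable {ι : Type*} (s : Finset ι) (r ω θ : ι → ℝ)

theorem iteratedDeriv_sum_mul_cos_mul_add (n : ℕ) (x : ℝ) :
    iteratedDeriv n (fun y => ∑ i ∈ s, r i * cos (ω i * y + θ i)) x =
      ∑ i ∈ s, r i * ω i ^ n * iteratedDeriv n cos (ω i * x + θ i) := by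
  rw [iteratedDeriv_fun_sum fun i _ => by fun_prop]
  refine sum_congr rfl fun i _ => ?_
  rw [iteratedDeriv_const_mul_field, iteratedDeriv_cos_mul_add, mul_assoc]

theorem iteratedDeriv_two_mul_add_two_sum_mul_cos (l : ℕ) (x : ℝ) :
    iteratedDeriv (2 * l + 2) (fun y => ∑ i ∈ s, r i * cos (ω i * y + θ i)) x =
      (-1) ^ (l + 1) *
        ∑ i ∈ s, r i * ω i ^ 2 * cos (ω i * x + θ i) * (ω i ^ 2) ^ l := by
  rw [iteratedDeriv_sum_mul_cos_mul_add, show 2 * l + 2 = 2 * (l + 1) by ring,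
    Real.iteratedDeriv_even_cos, mul_sum]
  refine sum_congr rfl fun i _ => ?_
  simp only [Pi.mul_apply, Pi.pow_apply, Pi.neg_apply, Pi.one_apply]
  ring

theorem iteratedDeriv_two_mul_add_one_sum_mul_cos (l : ℕ) (x : ℝ) :
    iteratedDeriv (2 * l + 1) (fun y => ∑ i ∈ s, r i * cos (ω i * y + θ i)) x =
      (-1) ^ (l + 1) * ∑ i ∈ s, r i * ω i * sin (ω i * x + θ i) * (ω i ^ 2) ^ l := by
  rw [iteratedDeriv_sum_mul_cos_mul_add, Real.iteratedDeriv_odd_cos, mul_sum]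
  refine sum_congr rfl fun i _ => ?_
  simp only [Pi.mul_apply, Pi.pow_apply, Pi.neg_apply, Pi.one_apply]
  ring

theorem eq_zero_of_iteratedDeriv_sum_mul_cos_eq_zero (hω : Set.InjOn (fun i => ω i ^ 2) s)
    (x : ℝ) (h : ∀ n, 1 ≤ n → n ≤ 2 * #s →
      iteratedDeriv n (fun y => ∑ i ∈ s, r i * cos (ω i * y + θ i)) x = 0)
    {i : ι} (hi : i ∈ s) (hωi : ω i ≠ 0) : r i = 0 := by
  have hcos : r i * ω i ^ 2 * cos (ω i * x + θ i) = 0 :=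
    eq_zero_of_forall_sum_mul_pow_eq_zero hω (fun l hl => by
      have := h (2 * l + 2) (by omega) (by omega)
      rwa [iteratedDeriv_two_mul_add_two_sum_mul_cos, mul_eq_zero,
        or_iff_right (pow_ne_zero _ (neg_ne_zero.mpr one_ne_zero))] at this) hi
  have hsin : r i * ω i * sin (ω i * x + θ i) = 0 :=
    eq_zero_of_forall_sum_mul_pow_eq_zero hω (fun l hl => by
      have := h (2 * l + 1) (by omega) (by omega)
      rwa [iteratedDeriv_two_mul_add_one_sum_mul_cos, mul_eq_zero,
        or_iff_right (pow_ne_zero _ (neg_ne_zero.mpr one_ne_zero))] at this) hi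
  have hcos' : r i * cos (ω i * x + θ i) = 0 := by
    simpa [hωi, mul_right_comm] using hcos
  have hsin' : r i * sin (ω i * x + θ i) = 0 := by
    simpa [hωi, mul_right_comm] using hsin
  calc r i = (r i * sin (ω i * x + θ i)) * sin (ω i * x + θ i)
        + (r i * cos (ω i * x + θ i)) * cos (ω i * x + θ i) := by
        linear_combination (-(r i)) * sin_sq_add_cos_sq (ω i * x + θ i)
    _ = 0 := by rw [hsin', hcos']; ring

end TrigSum

theorem trig_poly_some_derivative_nonzero_general
    (k : ℕ) (β : ℕ → ℂ)
    (hβ : ∃ j, 1 ≤ j ∧ j ≤ k ∧ β j ≠ 0)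
    (g : ℝ → ℝ)
    (hg : g = fun x => ∑ m ∈ Finset.range (k + 1),
      2 * ‖β m‖ * Real.cos ((m : ℝ) * x + (β m).arg)) :
    ∀ x : ℝ, ∃ i, 1 ≤ i ∧ i ≤ 4 * k ∧ iteratedDeriv i g x ≠ 0 := by
  intro x
  by_contra! hvanish
  obtain ⟨j, hj1, hjk, hβj⟩ := hβ
  have hinj : Set.InjOn (fun m : ℕ => (m : ℝ) ^ 2) (range (k + 1)) := fun m _ n _ hmn => by
    simpa using hmn
  have hamp := eq_zero_of_iteratedDeriv_sum_mul_cos_eq_zero (range (k + 1))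
    (fun m => 2 * ‖β m‖) (fun m => m) (fun m => (β m).arg) hinj x
    (fun n hn1 hn2 => hg ▸ hvanish n hn1 (by rw [card_range] at hn2; omega))
    (i := j) (mem_range.mpr (by omega)) (Nat.cast_ne_zero.mpr (by omega))
  simp [hβj] at hamp

theorem trig_poly_some_derivative_nonzero
    (k : ℕ) (hk : 1 ≤ k) (β : ℕ → ℂ)
    (hβ : ∃ j, 1 ≤ j ∧ j ≤ k ∧ β j ≠ 0)
    (g : ℝ → ℝ)
    (hg : g = fun x => ∑ m ∈ Finset.range (k + 1),
      2 * ‖β m‖ * Real.cos ((m : ℝ) * x + (β m).arg)) :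
    ∀ x : ℝ, ∃ i, 1 ≤ i ∧ i ≤ 4 * k ∧ iteratedDeriv i g x ≠ 0 :=
  trig_poly_some_derivative_nonzero_general k β hβ g hg
end

section
/- Let g : ℝ → ℝ, g(x) = Σ_{m=0}^k (β_m e^{imx} + conj(β_m) e^{-imx}) with some β_j ≠ 0 for 1 ≤ j ≤ k. If x ∈ ℝ satisfies g'(x) = g''(x) = ⋯ = g^{(4k)}(x) = 0, then cos(j x + arg β_j) = sin(j x + arg β_j) = 0 for that j, which is impossible; hence no such x exists. -/
/-!
For `n ≥ 1` the constant term drops out and `g⁽ⁿ⁾(x) = ∑ₚ wₚ λₚⁿ`, a power sum over the `2k`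
distinct nonzero frequencies `λ = ± i m` (`1 ≤ m ≤ k`) with weights `wₚ = βₘ e^{imx}` and their
conjugates. The vanishing of `g', …, g⁽²ᵏ⁾` at `x` is then a Vandermonde system for the `wₚ λₚ`,
so all weights vanish, contradicting `βⱼ ≠ 0`.
-/

open Complex Finset ComplexConjugate

theorem Finset.mul_eq_zero_of_forall_sum_mul_pow_succ_eq_zero {R ι : Type*} [CommRing R]
    [IsDomain R] {s : Finset ι} {f w : ι → R} (hf : Set.InjOn f s)
    (h : ∀ n < #s, ∑ i ∈ s, w i * f i ^ (n + 1) = 0) : ∀ i ∈ s, w i * f i = 0 := by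
  let e := s.equivFin
  have hvanish := Matrix.eq_zero_of_forall_pow_sum_mul_pow_eq_zero
    (f := fun j => f (e.symm j)) (v := fun j => w (e.symm j) * f (e.symm j))
    (hf.injective.comp e.symm.injective) fun n => by
      rw [e.symm.sum_comp (fun i : s => w i * f i * f i ^ (n : ℕ)),
        sum_coe_sort s (fun i => w i * f i * f i ^ (n : ℕ))]
      simpa only [mul_assoc, pow_succ'] using h n n.isLt
  intro i hi
  simpa using congrFun hvanish (e ⟨i, hi⟩)

theorem iteratedDeriv_cexp_const_mul_ofReal (n : ℕ) (c : ℂ) :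
    iteratedDeriv n (fun t : ℝ => exp (c * t)) = fun t : ℝ => c ^ n * exp (c * t) := by
  induction n with
  | zero => simp
  | succ n ih =>
    ext t
    have hderiv : HasDerivAt (fun t : ℝ => exp (c * t)) (c * exp (c * t)) t := by
      simpa [mul_comm] using ((hasDerivAt_id (t : ℂ)).const_mul c).cexp.comp_ofReal
    rw [iteratedDeriv_succ, ih, (hderiv.const_mul (c ^ n)).deriv]
    ring

theorem iteratedDeriv_sum_mul_cexp {ι : Type*} (s : Finset ι) (a c : ι → ℂ) (n : ℕ) (t : ℝ) :
    iteratedDeriv n (fun t : ℝ => ∑ i ∈ s, a i * exp (c i * t)) t =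
      ∑ i ∈ s, a i * exp (c i * t) * c i ^ n := by
  have hofReal : ContDiff ℝ n (fun t : ℝ => (t : ℂ)) := ofRealCLM.contDiff
  rw [iteratedDeriv_fun_sum fun i _ => by fun_prop]
  refine sum_congr rfl fun i _ => ?_
  rw [iteratedDeriv_const_mul_field, iteratedDeriv_cexp_const_mul_ofReal]
  ring

theorem ofReal_iteratedDeriv {n : ℕ} {g : ℝ → ℝ} {x : ℝ} (hg : ContDiffAt ℝ n g x) :
    ((iteratedDeriv n g x : ℝ) : ℂ) = iteratedDeriv n (fun t => (g t : ℂ)) x := by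
  have hcomp := ofRealCLM.iteratedFDeriv_comp_left hg le_rfl
  rw [iteratedDeriv, iteratedDeriv, show (fun t => (g t : ℂ)) = ofRealCLM ∘ g from rfl, hcomp]
  rfl

noncomputable def trigPoly (k : ℕ) (β : ℕ → ℂ) (x : ℝ) : ℂ :=
  ∑ m ∈ range (k + 1), (β m * exp ((m : ℝ) * x * I) + conj (β m) * exp (-((m : ℝ) * x * I)))

def harmonicFreq : ℕ ⊕ ℕ → ℂ :=
  Sum.elim (fun m => (m + 1) * I) (fun m => -((m + 1) * I))

noncomputable def harmonicAmp (β : ℕ → ℂ) : ℕ ⊕ ℕ → ℂ :=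
  Sum.elim (fun m => β (m + 1)) (fun m => conj (β (m + 1)))

theorem harmonicFreq_injective : Function.Injective harmonicFreq := by
  rintro (a | a) (b | b) h <;> simp [harmonicFreq, Complex.ext_iff] at h ⊢ <;> linarith

theorem harmonicFreq_ne_zero (p : ℕ ⊕ ℕ) : harmonicFreq p ≠ 0 := by
  cases p <;> simp [harmonicFreq, I_ne_zero, Nat.cast_add_one_ne_zero]

theorem trigPoly_eq_const_add_sum (k : ℕ) (β : ℕ → ℂ) :
    trigPoly k β = fun x : ℝ => (β 0 + conj (β 0)) +
      ∑ p ∈ (range k).disjSum (range k), harmonicAmp β p * exp (harmonicFreq p * x) := by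
  ext x
  simp only [trigPoly, sum_range_succ', sum_add_distrib, sum_disjSum, harmonicAmp, harmonicFreq,
    Sum.elim_inl, Sum.elim_inr]
  have hfreq (m : ℕ) : ((m + 1 : ℕ) : ℝ) * (x : ℂ) * I = ((m : ℂ) + 1) * I * x := by
    push_cast
    ring
  simp only [hfreq, neg_mul, Nat.cast_zero, ofReal_zero, zero_mul, neg_zero, exp_zero, mul_one]
  ring

theorem contDiff_trigPoly (k : ℕ) (β : ℕ → ℂ) {n : WithTop ℕ∞} : ContDiff ℝ n (trigPoly k β) := by
  have hofReal : ContDiff ℝ n (fun t : ℝ => (t : ℂ)) := ofRealCLM.contDiff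
  rw [trigPoly_eq_const_add_sum]
  fun_prop

theorem no_point_with_all_derivatives_vanishing_general
    (k : ℕ) (β : ℕ → ℂ)
    (hβ : ∃ j, 1 ≤ j ∧ j ≤ k ∧ β j ≠ 0)
    (g : ℝ → ℝ)
    (hg : ∀ x : ℝ, (g x : ℂ) = ∑ m ∈ Finset.range (k + 1),
      (β m * Complex.exp ((m : ℝ) * x * Complex.I) +
        (starRingEnd ℂ) (β m) * Complex.exp (-((m : ℝ) * x * Complex.I)))) :
    ¬ ∃ x : ℝ, ∀ i, 1 ≤ i → i ≤ 4 * k → iteratedDeriv i g x = 0 := by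
  rintro ⟨x, hx⟩
  obtain ⟨j, hj1, hjk, hβj⟩ := hβ
  have hgC : (fun t => (g t : ℂ)) = trigPoly k β := funext hg
  have hg_re : g = fun t => (trigPoly k β t).re :=
    funext fun t => by rw [← congrFun hgC t, ofReal_re]
  have hg_smooth : ContDiff ℝ ⊤ g := hg_re ▸ reCLM.contDiff.comp (contDiff_trigPoly k β)
  set S := (range k).disjSum (range k)
  have hmoments (n : ℕ) (hn : n < #S) :
      ∑ p ∈ S, harmonicAmp β p * exp (harmonicFreq p * x) * harmonicFreq p ^ (n + 1) = 0 := by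
    rw [card_disjSum, card_range] at hn
    rw [← iteratedDeriv_sum_mul_cexp, ← iteratedDeriv_const_add n.succ_pos (β 0 + conj (β 0)),
      ← trigPoly_eq_const_add_sum, ← hgC,
      ← ofReal_iteratedDeriv (hg_smooth.contDiffAt.of_le le_top), hx (n + 1) (by omega) (by omega),
      ofReal_zero]
  have hj := mul_eq_zero_of_forall_sum_mul_pow_succ_eq_zero harmonicFreq_injective.injOn hmoments
    (.inl (j - 1)) (by simp [S]; omega)
  simp [harmonicAmp, harmonicFreq_ne_zero, exp_ne_zero, Nat.sub_add_cancel hj1, hβj] at hj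

theorem no_point_with_all_derivatives_vanishing
    (k : ℕ) (hk : 1 ≤ k) (β : ℕ → ℂ)
    (hβ : ∃ j, 1 ≤ j ∧ j ≤ k ∧ β j ≠ 0)
    (g : ℝ → ℝ)
    (hg : ∀ x : ℝ, (g x : ℂ) = ∑ m ∈ Finset.range (k + 1),
      (β m * Complex.exp ((m : ℝ) * x * Complex.I) +
        (starRingEnd ℂ) (β m) * Complex.exp (-((m : ℝ) * x * Complex.I)))) :
    ¬ ∃ x : ℝ, ∀ i, 1 ≤ i → i ≤ 4 * k → iteratedDeriv i g x = 0 :=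
  no_point_with_all_derivatives_vanishing_general k β hβ g hg
end
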